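/- Let γ be a path in [n]×[k], write γ(i) = (a_i, b_i), and let 0 ≤ i ≤ n+k. (1) Assume n ≥ 1 and that one of the following holds: (i) i = 0 and γ(1) = (1,0); (ii) 0 < i < n+k and b_{i−1} = b_i = b_{i+1}; (iii) i = n+k and γ(n+k−1) = (n−1, k). Then there is a unique path γ̂ in [n−1]×[k] with (d_{a_i} × id) ∘ γ̂ = γ ∘ d_i, and E_γ(d_i(x), j) = (d_{a_i} × id)(E_{γ̂}(x, j)) for all (x,j) ∈ [n+k−1]×[k]. (2) Assume k ≥ 1 and that one of the following holds: (i) i = 0 and γ(1) = (0,1); (ii) 0 < i < n+k and a_{i−1} = a_i = a_{i+1}; (iii) i = n+k and γ(n+k−1) = (n, k−1). Then there is a unique path γ̂ in [n]×[k−1] with (id × d_{b_i}) ∘ γ̂ = γ ∘ d_i, and E_γ(d_i(x), d_{b_i}(y)) = (id × d_{b_i})(E_{γ̂}(x, y)) for all (x,y) ∈ [n+k−1]×[k−1]. -/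

import Mathlib

/-- `γ` is a path in `[n] × [k]` (a simplex of maximal dimension of `Δⁿ × Δᵏ`):
it starts at `(0,0)`, ends at `(n,k)`, and each step increases exactly one
coordinate by exactly `1`.  The parameter `m` records the length of the path;
necessarily `m = n + k`. -/
def IsPath (n k m : ℕ) (γ : Fin (m + 1) → Fin (n + 1) × Fin (k + 1)) : Prop :=
  γ 0 = (0, 0) ∧
  γ (Fin.last m) = (Fin.last n, Fin.last k) ∧
  ∀ i : Fin m,
    (((γ i.succ).1 : ℕ) = ((γ i.castSucc).1 : ℕ) + 1 ∧ (γ i.succ).2 = (γ i.castSucc).2) ∨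
    ((γ i.succ).1 = (γ i.castSucc).1 ∧ ((γ i.succ).2 : ℕ) = ((γ i.castSucc).2 : ℕ) + 1)

/-- The extension `E_γ : [n+k] × [k] → [n] × [k]` of a path `γ`, given by
`E_γ(i, j) = (a_i, max (b_i) j)` where `γ i = (a_i, b_i)`. -/
def pathExt (n k m : ℕ) (γ : Fin (m + 1) → Fin (n + 1) × Fin (k + 1)) :
    Fin (m + 1) × Fin (k + 1) → Fin (n + 1) × Fin (k + 1) :=
  fun p => ((γ p.1).1, max (γ p.1).2 p.2)

/-- The strict order on paths: `γ₁ < γ₂` if at the least index `s` where they differ the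
first coordinate of `γ₁ s` is smaller than that of `γ₂ s`. -/
def pathLT (n k m : ℕ) (γ₁ γ₂ : Fin (m + 1) → Fin (n + 1) × Fin (k + 1)) : Prop :=
  ∃ s : Fin (m + 1), γ₁ s ≠ γ₂ s ∧ (∀ t : Fin (m + 1), t < s → γ₁ t = γ₂ t) ∧
    (γ₁ s).1 < (γ₂ s).1

/-!
A path is the same thing as a pair of monotone coordinate sequences with `a_j + b_j = j`.
If the steps of `γ` next to `i` are horizontal, the level `a_i` is visited only at time `i`,
so `γ ∘ d_i` misses it and factors through `d_{a_i}`. Collapsing that level lowers `a_j` by one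
exactly for `j > i`, which is also where `d_i` shifts the index by one, so the factor again
satisfies `a_j + b_j = j`. Part (2) is part (1) with the coordinates swapped; the identities
for the extensions hold because faces are monotone and hence commute with `max`.
-/

section

variable {n k m : ℕ}

namespace IsPath

theorem val_fst_add_val_snd {γ : Fin (m + 1) → Fin (n + 1) × Fin (k + 1)}
    (hγ : IsPath n k m γ) (j : Fin (m + 1)) : ((γ j).1 : ℕ) + (γ j).2 = j := by
  induction j using Fin.induction with
  | zero => simp [hγ.1]
  | succ j ih =>
    rcases hγ.2.2 j with ⟨h1, h2⟩ | ⟨h1, h2⟩ <;>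
      simp only [Fin.val_succ, Fin.val_castSucc, h1, h2] at ih ⊢ <;> omega

theorem monotone_fst {γ : Fin (m + 1) → Fin (n + 1) × Fin (k + 1)} (hγ : IsPath n k m γ) :
    Monotone fun j => (γ j).1 := by
  refine Fin.monotone_iff_le_succ.2 fun j => ?_
  rcases hγ.2.2 j with ⟨h, -⟩ | ⟨h, -⟩ <;> simp [Fin.le_def, h]

theorem monotone_snd {γ : Fin (m + 1) → Fin (n + 1) × Fin (k + 1)} (hγ : IsPath n k m γ) :
    Monotone fun j => (γ j).2 := by
  refine Fin.monotone_iff_le_succ.2 fun j => ?_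
  rcases hγ.2.2 j with ⟨-, h⟩ | ⟨-, h⟩ <;> simp [Fin.le_def, h]

end IsPath

theorem isPath_iff {γ : Fin (m + 1) → Fin (n + 1) × Fin (k + 1)} :
    IsPath n k m γ ↔ m = n + k ∧ Monotone (fun j => (γ j).1) ∧ Monotone (fun j => (γ j).2) ∧
      ∀ j, ((γ j).1 : ℕ) + (γ j).2 = j := by
  refine ⟨fun hγ => ⟨?_, hγ.monotone_fst, hγ.monotone_snd, hγ.val_fst_add_val_snd⟩, ?_⟩
  · simpa [hγ.2.1] using (hγ.val_fst_add_val_snd (Fin.last m)).symm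
  rintro ⟨hm, hfst, hsnd, hsum⟩
  refine ⟨?_, ?_, fun j => ?_⟩
  · have := hsum 0
    simp only [Prod.ext_iff, Fin.ext_iff, Fin.val_zero] at *
    omega
  · have := hsum (Fin.last m)
    have := (γ (Fin.last m)).1.isLt
    have := (γ (Fin.last m)).2.isLt
    simp only [Prod.ext_iff, Fin.ext_iff, Fin.val_last] at *
    omega
  · have h1 : (γ j.castSucc).1 ≤ (γ j.succ).1 := hfst (Fin.castSucc_le_succ j)
    have h2 : (γ j.castSucc).2 ≤ (γ j.succ).2 := hsnd (Fin.castSucc_le_succ j)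
    have := hsum j.castSucc; have := hsum j.succ
    simp only [Fin.le_def, Fin.val_succ, Fin.val_castSucc, Fin.ext_iff] at *
    omega

namespace IsPath

theorem swap {γ : Fin (m + 1) → Fin (n + 1) × Fin (k + 1)} (hγ : IsPath n k m γ) :
    IsPath k n m (Prod.swap ∘ γ) := by
  obtain ⟨hm, hfst, hsnd, hsum⟩ := isPath_iff.1 hγ
  exact isPath_iff.2 ⟨by omega, hsnd, hfst, fun j => by simpa [add_comm] using hsum j⟩

theorem fst_lt_of_snd_eq {γ : Fin (m + 1) → Fin (n + 1) × Fin (k + 1)} (hγ : IsPath n k m γ)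
    {i j : Fin (m + 1)} (hij : i < j) (h : (γ i).2 = (γ j).2) : (γ i).1 < (γ j).1 := by
  have hi := hγ.val_fst_add_val_snd i
  have hj := hγ.val_fst_add_val_snd j
  rw [Fin.lt_def] at hij ⊢
  rw [h] at hi
  omega

theorem fst_ne_of_adjacent_snd_eq {γ : Fin (m + 1) → Fin (n + 1) × Fin (k + 1)}
    (hγ : IsPath n k m γ) {i : Fin (m + 1)}
    (hprev : ∀ j : Fin (m + 1), (j : ℕ) + 1 = i → (γ j).2 = (γ i).2)
    (hnext : ∀ j : Fin (m + 1), (i : ℕ) + 1 = j → (γ j).2 = (γ i).2)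
    {j : Fin (m + 1)} (hj : j ≠ i) : (γ j).1 ≠ (γ i).1 := by
  rcases hj.lt_or_gt with h | h <;> have h' := Fin.lt_def.1 h
  · let p : Fin (m + 1) := ⟨i - 1, by omega⟩
    have hp : (p : ℕ) + 1 = i := by simp only [p]; omega
    exact ((hγ.monotone_fst (show j ≤ p from Fin.le_def.2 (by simp only [p]; omega))).trans_lt
      (hγ.fst_lt_of_snd_eq (Fin.lt_def.2 (by omega)) (hprev p hp))).ne
  · let q : Fin (m + 1) := ⟨i + 1, by omega⟩
    exact ((hγ.fst_lt_of_snd_eq (Fin.lt_def.2 (by simp [q])) (hnext q rfl).symm).trans_le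
      (hγ.monotone_fst (show q ≤ j from Fin.le_def.2 (by simp only [q]; omega)))).ne'

theorem fst_succAbove_ne {γ : Fin (m + 2) → Fin (n + 2) × Fin (k + 1)}
    (hγ : IsPath (n + 1) k (m + 1) γ) {i : Fin (m + 2)}
    (hi : (i = 0 ∧ γ 1 = (1, 0)) ∨
      (∃ p : Fin m, i = p.succ.castSucc ∧
        (γ p.castSucc.castSucc).2 = (γ p.succ.castSucc).2 ∧
        (γ p.succ.castSucc).2 = (γ p.succ.succ).2) ∨
      (i = Fin.last (m + 1) ∧
        γ (Fin.castSucc (Fin.last m)) = (Fin.castSucc (Fin.last n), Fin.last k)))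
    (x : Fin (m + 1)) : (γ (i.succAbove x)).1 ≠ (γ i).1 := by
  refine hγ.fst_ne_of_adjacent_snd_eq (fun j hj => ?_) (fun j hj => ?_) (Fin.succAbove_ne i x)
  · rcases hi with ⟨rfl, -⟩ | ⟨p, rfl, hp, -⟩ | ⟨rfl, hl⟩
    · simp at hj
    · obtain rfl : j = p.castSucc.castSucc := Fin.ext (by simpa using hj)
      exact hp
    · obtain rfl : j = (Fin.last m).castSucc := Fin.ext (by simpa using hj)
      simp [hl, hγ.2.1]
  · rcases hi with ⟨rfl, h1⟩ | ⟨p, rfl, -, hp⟩ | ⟨rfl, -⟩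
    · obtain rfl : j = 1 := Fin.ext (by simpa using hj.symm)
      simp [h1, hγ.1]
    · obtain rfl : j = p.succ.succ := Fin.ext (by simpa using hj.symm)
      exact hp.symm
    · have := j.isLt
      simp only [Fin.val_last] at hj
      omega

theorem exists_succAbove_fst_eq {γ : Fin (m + 2) → Fin (n + 2) × Fin (k + 1)}
    (hγ : IsPath (n + 1) k (m + 1) γ) {i : Fin (m + 2)}
    (hi : ∀ x, (γ (i.succAbove x)).1 ≠ (γ i).1) :
    ∃ γh : Fin (m + 1) → Fin (n + 1) × Fin (k + 1), IsPath n k m γh ∧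
      ∀ x, ((γ i).1.succAbove (γh x).1, (γh x).2) = γ (i.succAbove x) := by
  choose g hg using fun x => Fin.exists_succAbove_eq (hi x)
  refine ⟨fun x => (g x, (γ (i.succAbove x)).2), ?_, fun x => Prod.ext (hg x) rfl⟩
  obtain ⟨hm, hfst, hsnd, hsum⟩ := isPath_iff.1 hγ
  have hd := Fin.strictMono_succAbove i
  have ha := Fin.strictMono_succAbove (γ i).1
  have hbelow (x) : i.succAbove x < i ↔ (γ i).1.succAbove (g x) < (γ i).1 := by
    rw [hg x]
    exact ⟨fun h => (hfst h.le).lt_of_ne (hi x), hfst.reflect_lt⟩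
  refine isPath_iff.2 ⟨by omega, fun x y hxy => ?_, hsnd.comp hd.monotone, fun x => ?_⟩
  · dsimp only
    rw [← ha.le_iff_le, hg, hg]
    exact hfst (hd.monotone hxy)
  · have hx := hsum (i.succAbove x)
    rw [← hg x] at hx
    dsimp only
    by_cases h : i.succAbove x < i
    · have h' := (hbelow x).1 h
      rw [Fin.succAbove_lt_iff_castSucc_lt] at h h'
      rw [Fin.succAbove_of_castSucc_lt _ _ h] at hx ⊢
      rwa [Fin.succAbove_of_castSucc_lt _ _ h'] at hx
    · have h' := mt (hbelow x).2 h
      rw [Fin.succAbove_lt_iff_castSucc_lt, not_lt] at h h'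
      rw [Fin.succAbove_of_le_castSucc _ _ h] at hx ⊢
      rw [Fin.succAbove_of_le_castSucc _ _ h'] at hx
      simp only [Fin.val_succ] at hx
      omega

end IsPath

theorem pathExt_succAbove_fst {γ : Fin (m + 2) → Fin (n + 2) × Fin (k + 1)}
    {γh : Fin (m + 1) → Fin (n + 1) × Fin (k + 1)} {i : Fin (m + 2)} {a : Fin (n + 2)}
    (h : ∀ x, (a.succAbove (γh x).1, (γh x).2) = γ (i.succAbove x)) (x : Fin (m + 1))
    (j : Fin (k + 1)) :
    pathExt (n + 1) k (m + 1) γ (i.succAbove x, j) =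
      (a.succAbove (pathExt n k m γh (x, j)).1, (pathExt n k m γh (x, j)).2) := by
  simp only [pathExt, ← h x]

theorem pathExt_succAbove_snd {γ : Fin (m + 2) → Fin (n + 1) × Fin (k + 2)}
    {γh : Fin (m + 1) → Fin (n + 1) × Fin (k + 1)} {i : Fin (m + 2)} {b : Fin (k + 2)}
    (h : ∀ x, ((γh x).1, b.succAbove (γh x).2) = γ (i.succAbove x)) (x : Fin (m + 1))
    (y : Fin (k + 1)) :
    pathExt n (k + 1) (m + 1) γ (i.succAbove x, b.succAbove y) =
      ((pathExt n k m γh (x, y)).1, b.succAbove (pathExt n k m γh (x, y)).2) := by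
  simp only [pathExt, ← h x, (Fin.strictMono_succAbove b).monotone.map_max]

end

/-- Faces of path extensions.  Part (1): for a path `γ` in `[n+1] × [k]` and an index `i`
satisfying one of the conditions (i) `i = 0` and `γ 1 = (1,0)`; (ii) `0 < i < n+1+k` and
`b_{i-1} = b_i = b_{i+1}`; (iii) `i` is the last index and `γ (n+k) = (n, k)`, there is a
unique path `γ̂` in `[n] × [k]` with `(d_{a_i} × id) ∘ γ̂ = γ ∘ d_i`, and
`E_γ (d_i x, j) = (d_{a_i} × id) (E_{γ̂} (x, j))`.
Part (2): the analogous statement for a path `γ` in `[n] × [k+1]`, with the roles of the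
coordinates interchanged, producing `γ̂` in `[n] × [k]` with `(id × d_{b_i}) ∘ γ̂ = γ ∘ d_i`
and `E_γ (d_i x, d_{b_i} y) = (id × d_{b_i}) (E_{γ̂} (x, y))`. -/
theorem pathExt_faces (n k : ℕ) :
    (∀ (γ : Fin (n + k + 2) → Fin (n + 2) × Fin (k + 1)),
      IsPath (n + 1) k (n + k + 1) γ →
      ∀ i : Fin (n + k + 2),
        ((i = 0 ∧ γ 1 = (1, 0)) ∨
          (∃ p : Fin (n + k), i = p.succ.castSucc ∧
            (γ p.castSucc.castSucc).2 = (γ p.succ.castSucc).2 ∧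
            (γ p.succ.castSucc).2 = (γ p.succ.succ).2) ∨
          (i = Fin.last (n + k + 1) ∧
            γ (Fin.castSucc (Fin.last (n + k))) = (Fin.castSucc (Fin.last n), Fin.last k))) →
        ∃ γh : Fin (n + k + 1) → Fin (n + 1) × Fin (k + 1),
          IsPath n k (n + k) γh ∧
          (∀ x : Fin (n + k + 1),
            ((γ i).1.succAbove (γh x).1, (γh x).2) = γ (i.succAbove x)) ∧
          (∀ (x : Fin (n + k + 1)) (j : Fin (k + 1)),
            pathExt (n + 1) k (n + k + 1) γ (i.succAbove x, j) =
              ((γ i).1.succAbove (pathExt n k (n + k) γh (x, j)).1,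
                (pathExt n k (n + k) γh (x, j)).2)) ∧
          (∀ γh' : Fin (n + k + 1) → Fin (n + 1) × Fin (k + 1),
            IsPath n k (n + k) γh' →
            (∀ x : Fin (n + k + 1),
              ((γ i).1.succAbove (γh' x).1, (γh' x).2) = γ (i.succAbove x)) →
            γh' = γh)) ∧
    (∀ (γ : Fin (n + k + 2) → Fin (n + 1) × Fin (k + 2)),
      IsPath n (k + 1) (n + k + 1) γ →
      ∀ i : Fin (n + k + 2),
        ((i = 0 ∧ γ 1 = (0, 1)) ∨
          (∃ p : Fin (n + k), i = p.succ.castSucc ∧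
            (γ p.castSucc.castSucc).1 = (γ p.succ.castSucc).1 ∧
            (γ p.succ.castSucc).1 = (γ p.succ.succ).1) ∨
          (i = Fin.last (n + k + 1) ∧
            γ (Fin.castSucc (Fin.last (n + k))) = (Fin.last n, Fin.castSucc (Fin.last k)))) →
        ∃ γh : Fin (n + k + 1) → Fin (n + 1) × Fin (k + 1),
          IsPath n k (n + k) γh ∧
          (∀ x : Fin (n + k + 1),
            ((γh x).1, (γ i).2.succAbove (γh x).2) = γ (i.succAbove x)) ∧
          (∀ (x : Fin (n + k + 1)) (y : Fin (k + 1)),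
            pathExt n (k + 1) (n + k + 1) γ (i.succAbove x, (γ i).2.succAbove y) =
              ((pathExt n k (n + k) γh (x, y)).1,
                (γ i).2.succAbove (pathExt n k (n + k) γh (x, y)).2)) ∧
          (∀ γh' : Fin (n + k + 1) → Fin (n + 1) × Fin (k + 1),
            IsPath n k (n + k) γh' →
            (∀ x : Fin (n + k + 1),
              ((γh' x).1, (γ i).2.succAbove (γh' x).2) = γ (i.succAbove x)) →
            γh' = γh)) := by
  refine ⟨fun γ hγ i hi => ?_, fun γ hγ i hi => ?_⟩
  · obtain ⟨γh, hpath, hfac⟩ := hγ.exists_succAbove_fst_eq (hγ.fst_succAbove_ne hi)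
    refine ⟨γh, hpath, hfac, pathExt_succAbove_fst hfac, fun γh' _ hfac' => funext fun x => ?_⟩
    exact (Fin.succAbove_right_injective.prodMap Function.injective_id)
      ((hfac' x).trans (hfac x).symm)
  · obtain ⟨γh, hpath, hfac⟩ := hγ.swap.exists_succAbove_fst_eq <| hγ.swap.fst_succAbove_ne <| by
      rcases hi with ⟨h0, h1⟩ | hmid | ⟨hl, h⟩
      exacts [Or.inl ⟨h0, by simp [h1]⟩, Or.inr (Or.inl hmid), Or.inr (Or.inr ⟨hl, by simp [h]⟩)]
    have hfac_swap (x : Fin (n + k + 1)) :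
        (((Prod.swap ∘ γh) x).1, (γ i).2.succAbove ((Prod.swap ∘ γh) x).2) = γ (i.succAbove x) :=
      congrArg Prod.swap (hfac x)
    refine ⟨Prod.swap ∘ γh, hpath.swap, hfac_swap, pathExt_succAbove_snd hfac_swap,
      fun γh' _ hfac' => funext fun x => ?_⟩
    exact (Function.injective_id.prodMap Fin.succAbove_right_injective)
      ((hfac' x).trans (hfac_swap x).symm)
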